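/- Let G=(V,E) be a graph and let 𝒫_R and 𝒫_B be two partitions of V such that (G, 𝒫_B ∪ 𝒫_R) is c-connected. If a planar embedding of G is c-planar for 𝒫_B ∪ 𝒫_R, then the same embedding is c-planar for the connected intersection partition 𝒫'_I of 𝒫_B and 𝒫_R; in particular, if (G, 𝒫_B ∪ 𝒫_R) is c-planar then (G, 𝒫'_I) is c-planar. -/

import Mathlib

/-!
Formalization of statements from
"Clustered Planarity of Overlapping Clusters" (arXiv:1609.04606).

Planarity is modeled topologically: a drawing assigns to each vertex a point of the
plane `ℝ × ℝ` and to each edge a simple arc, such that arcs meet only in common end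
vertices.  The outer face of (a part of) a drawing is the set of points lying in an
unbounded connected component of the complement.
-/

open scoped Classical

noncomputable section

namespace ClusteredPlanarity

/-- The plane. -/
abbrev Plane := ℝ × ℝ

/-- A drawing of a graph in the plane: a point for every vertex and a curve for every
(directed) edge. -/
structure Drawing {V : Type*} (G : SimpleGraph V) where
  pos : V → Plane
  curve : ∀ {u v : V}, G.Adj u v → Path (pos u) (pos v)

variable {V : Type*} {G : SimpleGraph V}

/-- A drawing is planar (i.e., is a planar embedding) if distinct vertices get distinct
points, every edge is a simple arc meeting the vertex points only in its end vertices,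
the two orientations of an edge are drawn by the same arc, and two distinct edges meet
only in common end vertices. -/
structure Drawing.IsPlanar (D : Drawing G) : Prop where
  pos_injective : Function.Injective D.pos
  curve_symm : ∀ {u v : V} (h : G.Adj u v), D.curve h.symm = (D.curve h).symm
  curve_injective : ∀ {u v : V} (h : G.Adj u v), Function.Injective (D.curve h)
  curve_vertex : ∀ {u v : V} (h : G.Adj u v) (w : V),
    D.pos w ∈ Set.range (D.curve h) → w = u ∨ w = v
  curve_disjoint : ∀ {u v u' v' : V} (h : G.Adj u v) (h' : G.Adj u' v'),
    s(u, v) ≠ s(u', v') → ∀ x ∈ Set.range (D.curve h), x ∈ Set.range (D.curve h') →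
      x ∈ D.pos '' ({u, v} ∩ {u', v'} : Set V)

/-- The part of the plane occupied by the drawing of the subgraph induced by `C`. -/
def Drawing.image (D : Drawing G) (C : Set V) : Set Plane :=
  D.pos '' C ∪ ⋃ (u : V) (v : V) (_ : u ∈ C) (_ : v ∈ C) (h : G.Adj u v),
    Set.range (D.curve h)

/-- The outer face (outer region) determined by a set `K` in the plane: all points lying in
an unbounded connected component of the complement of `K`. -/
def outerRegion (K : Set Plane) : Set Plane :=
  {x | x ∉ K ∧ ¬ Bornology.IsBounded (connectedComponentIn Kᶜ x)}

/-- A drawing of `G` is a c-planar embedding for the set of clusters `𝒞` if it is a planar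
embedding such that, for every cluster `C`, all vertices not in `C` lie in the outer face of
the induced drawing of `G[C]`. -/
def Drawing.IsCPlanarFor (D : Drawing G) (𝒞 : Set (Set V)) : Prop :=
  D.IsPlanar ∧ ∀ C ∈ 𝒞, ∀ v : V, v ∉ C → D.pos v ∈ outerRegion (D.image C)

/-- A clustered graph `(G, 𝒞)` is c-connected if every cluster induces a connected
subgraph. -/
def CConnected (G : SimpleGraph V) (𝒞 : Set (Set V)) : Prop :=
  ∀ C ∈ 𝒞, (G.induce C).Connected

/-- A clustered graph `(G, 𝒞)` is c-co-connected if every cluster and the complement of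
every cluster induce connected subgraphs. -/
def CCoConnected (G : SimpleGraph V) (𝒞 : Set (Set V)) : Prop :=
  ∀ C ∈ 𝒞, (G.induce C).Connected ∧ (G.induce Cᶜ).Connected

/-- A clustered graph is c-planar iff it has a c-planar support: a supergraph on the same
vertex set in which all clusters are connected, together with a c-planar embedding. -/
def IsCPlanar (G : SimpleGraph V) (𝒞 : Set (Set V)) : Prop :=
  ∃ G' : SimpleGraph V, G ≤ G' ∧ CConnected G' 𝒞 ∧ ∃ D : Drawing G', D.IsCPlanarFor 𝒞

/-- Reachability inside a set `A` of vertices. -/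
def ReachIn (G : SimpleGraph V) (A : Set V) (u v : V) : Prop :=
  ∃ (hu : u ∈ A) (hv : v ∈ A), (G.induce A).Reachable ⟨u, hu⟩ ⟨v, hv⟩

/-- The connected intersection partition of two partitions `PB` and `PR`: the parts are the
vertex sets of the connected components of the graphs `G[B ∩ R]`, `B ∈ PB`, `R ∈ PR`. -/
def connectedIntersectionPartition (G : SimpleGraph V) (PB PR : Set (Set V)) :
    Set (Set V) :=
  {S | ∃ B ∈ PB, ∃ R ∈ PR, ∃ v ∈ B ∩ R, S = {w | ReachIn G (B ∩ R) w v}}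

/-- A graph is 2-connected if it has more than two vertices and no cut vertex. -/
def TwoConnected (G : SimpleGraph V) : Prop :=
  G.Connected ∧ 2 < Nat.card V ∧ ∀ v : V, (G.induce ({v}ᶜ : Set V)).Connected

/-- A graph is 3-connected if it has more than three vertices and no separation pair. -/
def ThreeConnected (G : SimpleGraph V) : Prop :=
  G.Connected ∧ 3 < Nat.card V ∧ ∀ s t : V, (G.induce ({s, t}ᶜ : Set V)).Connected

/-!
Let `S` be a component of `G[B ∩ R]` and `v ∉ S`. If `v ∉ B` (or `v ∉ R`), then `v` lies in the
outer face of the drawing of `B` (or `R`), which contains that of `S`. If `v ∈ B ∩ R`, follow a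
walk in the connected graph `G[R]` from `v` to `S`: the vertex `w` just before it enters `S` is
adjacent to `S` without belonging to it, so `w ∉ B`. The drawing of the walk up to `w` misses
the drawing of `S` and joins `v` to `w`, which lies in the outer face of `B`, hence of `S`.
-/

namespace ReachIn

variable {G' : SimpleGraph V} {A A' S : Set V} {u v w x : V}

theorem refl (hv : v ∈ A) : ReachIn G A v v := ⟨hv, hv, .rfl⟩

theorem trans (huv : ReachIn G A u v) (hvw : ReachIn G A v w) : ReachIn G A u w :=
  ⟨huv.1, hvw.2.1, huv.2.2.trans hvw.2.2⟩

theorem of_adj (hu : u ∈ A) (hv : v ∈ A) (h : G.Adj u v) : ReachIn G A u v :=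
  ⟨hu, hv, SimpleGraph.Adj.reachable (G := G.induce A) h⟩

@[elab_as_elim]
theorem head_induction_on {P : V → Prop} (h : ReachIn G A x v) (base : P v)
    (step : ∀ ⦃u c⦄, u ∈ A → G.Adj u c → ReachIn G A c v → P c → P u) : P x := by
  obtain ⟨hx, hv, ⟨p⟩⟩ := h
  suffices ∀ (a b : A), (G.induce A).Walk a b → b = ⟨v, hv⟩ → P a from this _ _ p rfl
  intro a b q
  induction q with
  | nil => rintro rfl; exact base
  | @cons a c b hac q ih =>
    rintro rfl
    exact step a.2 hac ⟨c.2, hv, ⟨q⟩⟩ (ih rfl)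

theorem mono (hG : G ≤ G') (hA : A ⊆ A') (h : ReachIn G A u v) : ReachIn G' A' u v :=
  h.head_induction_on (refl (hA h.2.1)) fun _ _ hu hadj hc ih =>
    (of_adj (hA hu) (hA hc.1) (hG hadj)).trans ih

theorem exists_adj_of_notMem (h : ReachIn G A x v) (hv : v ∈ S) (hx : x ∉ S) :
    ∃ w ∈ A, ∃ c ∈ S, G.Adj w c ∧ ReachIn G (A \ S) x w := by
  revert hx
  refine h.head_induction_on (fun hvS => absurd hv hvS) fun u c hu huc hc ih huS => ?_
  by_cases hcS : c ∈ S
  · exact ⟨u, hu, c, hcS, huc, refl (A := A \ S) ⟨hu, huS⟩⟩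
  · obtain ⟨w, hw, c', hc', hwc', hcw⟩ := ih hcS
    exact ⟨w, hw, c', hc', hwc', (of_adj (A := A \ S) ⟨hu, huS⟩ ⟨hc.1, hcS⟩ huc).trans hcw⟩

theorem connected_induce (hv : v ∈ A) : (G.induce {w | ReachIn G A w v}).Connected := by
  set S := {w | ReachIn G A w v}
  have hvS : v ∈ S := refl hv
  have hreach : ∀ x ∈ S, ReachIn G S x v := fun x hx =>
    hx.head_induction_on (refl hvS) fun u _ hu huc hc ih =>
      (of_adj (show u ∈ S from (of_adj hu hc.1 huc).trans hc) ih.1 huc).trans ih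
  have : Nonempty S := ⟨⟨v, hvS⟩⟩
  exact ⟨fun x y => (hreach x x.2).2.2.trans (hreach y y.2).2.2.symm⟩

end ReachIn

theorem outerRegion_anti {K L : Set Plane} (hKL : K ⊆ L) : outerRegion L ⊆ outerRegion K :=
  fun _ ⟨hxL, hunb⟩ => ⟨fun hxK => hxL (hKL hxK),
    fun hbdd => hunb (hbdd.subset (connectedComponentIn_mono _ (Set.compl_subset_compl.2 hKL)))⟩

theorem mem_outerRegion_of_joinedIn {K : Set Plane} {x y : Plane} (hxy : JoinedIn Kᶜ x y)
    (hy : y ∈ outerRegion K) : x ∈ outerRegion K := by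
  have hx := hxy.source_mem
  have hyx : y ∈ connectedComponentIn Kᶜ x :=
    (isPathConnected_pathComponentIn hx).isConnected.isPreconnected.subset_connectedComponentIn
      (mem_pathComponentIn_self hx) pathComponentIn_subset hxy
  exact ⟨hx, connectedComponentIn_eq hyx ▸ hy.2⟩

namespace Drawing

variable {D : Drawing G} {S T : Set V} {u v w : V}

theorem image_mono (D : Drawing G) (hST : S ⊆ T) : D.image S ⊆ D.image T := by
  rintro x (hx | hx)
  · exact Or.inl (Set.image_mono hST hx)
  · simp only [Set.mem_iUnion] at hx
    obtain ⟨u, v, hu, hv, h, hx⟩ := hx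
    exact Or.inr (Set.mem_iUnion₂.2 ⟨u, v, Set.mem_iUnion₂.2 ⟨hST hu, hST hv,
      Set.mem_iUnion.2 ⟨h, hx⟩⟩⟩)

theorem IsPlanar.pos_notMem_image (hD : D.IsPlanar) (hv : v ∉ S) : D.pos v ∉ D.image S := by
  rintro (⟨s, hs, hsv⟩ | hx)
  · exact hv (hD.pos_injective hsv ▸ hs)
  · simp only [Set.mem_iUnion] at hx
    obtain ⟨u, w, hu, hw, h, hx⟩ := hx
    rcases hD.curve_vertex h v hx with rfl | rfl
    exacts [hv hu, hv hw]

theorem IsPlanar.curve_notMem_image (hD : D.IsPlanar) (h : G.Adj u v) (hu : u ∉ S)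
    (hv : v ∉ S) {x : Plane} (hx : x ∈ Set.range (D.curve h)) : x ∉ D.image S := by
  rintro (⟨s, hs, rfl⟩ | hmem)
  · rcases hD.curve_vertex h s hx with rfl | rfl
    exacts [hu hs, hv hs]
  · simp only [Set.mem_iUnion] at hmem
    obtain ⟨a, b, ha, hb, h', hx'⟩ := hmem
    have hne : s(u, v) ≠ s(a, b) := by
      rw [Ne, Sym2.eq_iff]
      rintro (⟨rfl, -⟩ | ⟨rfl, -⟩)
      exacts [hu ha, hu hb]
    obtain ⟨c, ⟨hc, hc'⟩, -⟩ := hD.curve_disjoint h h' hne x hx hx'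
    have hcS : c ∈ S := by
      rcases hc' with rfl | rfl
      exacts [ha, hb]
    rcases hc with rfl | rfl
    exacts [hu hcS, hv hcS]

theorem IsPlanar.joinedIn_compl_image (hD : D.IsPlanar) (hTS : Disjoint T S)
    (h : ReachIn G T u w) : JoinedIn (D.image S)ᶜ (D.pos u) (D.pos w) := by
  have hT : ∀ ⦃x⦄, x ∈ T → x ∉ S := fun _ hx => hTS.notMem_of_mem_left hx
  refine h.head_induction_on (JoinedIn.refl (hD.pos_notMem_image (hT h.2.1)))
    fun x c hx hxc hc ih => ?_
  exact JoinedIn.trans ⟨D.curve hxc, fun t =>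
    hD.curve_notMem_image hxc (hT hx) (hT hc.1) ⟨t, rfl⟩⟩ ih

end Drawing

section ConnectedIntersection

variable {G' : SimpleGraph V} {D : Drawing G'} {B R : Set V} {v v₀ : V}

theorem pos_mem_outerRegion_component_of_mem_inter (hle : G ≤ G') (hD : D.IsPlanar)
    (hR : (G.induce R).Connected)
    (hB : ∀ w ∉ B, D.pos w ∈ outerRegion (D.image B)) (hv₀ : v₀ ∈ B ∩ R) (hv : v ∈ R)
    (hvS : ¬ ReachIn G (B ∩ R) v v₀) :
    D.pos v ∈ outerRegion (D.image {w | ReachIn G (B ∩ R) w v₀}) := by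
  set S := {w | ReachIn G (B ∩ R) w v₀}
  have hvv₀ : ReachIn G R v v₀ := ⟨hv, hv₀.2, hR.preconnected ⟨v, hv⟩ ⟨v₀, hv₀.2⟩⟩
  obtain ⟨w, hwR, c, hcS, hwc, hvw⟩ :=
    hvv₀.exists_adj_of_notMem (S := S) (ReachIn.refl hv₀) hvS
  have hwB : w ∉ B := fun hwB =>
    hvw.2.1.2 ((ReachIn.of_adj (A := B ∩ R) ⟨hwB, hwR⟩ hcS.1 hwc).trans hcS)
  have hjoin : JoinedIn (D.image S)ᶜ (D.pos v) (D.pos w) :=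
    hD.joinedIn_compl_image Set.disjoint_sdiff_left (hvw.mono hle le_rfl)
  exact mem_outerRegion_of_joinedIn hjoin
    (outerRegion_anti (D.image_mono fun _ hx => hx.1.1) (hB w hwB))

theorem Drawing.IsCPlanarFor.connectedIntersectionPartition {PB PR : Set (Set V)}
    (hle : G ≤ G') (hccR : CConnected G PR) (hD : D.IsCPlanarFor (PB ∪ PR)) :
    D.IsCPlanarFor (connectedIntersectionPartition G PB PR) := by
  obtain ⟨hpl, hout⟩ := hD
  refine ⟨hpl, ?_⟩
  rintro _ ⟨B, hB, R, hR, v₀, hv₀, rfl⟩ v hvS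
  have hSB : D.image {w | ReachIn G (B ∩ R) w v₀} ⊆ D.image B := D.image_mono fun _ hx => hx.1.1
  have hSR : D.image {w | ReachIn G (B ∩ R) w v₀} ⊆ D.image R := D.image_mono fun _ hx => hx.1.2
  by_cases hvB : v ∈ B
  · by_cases hvR : v ∈ R
    · exact pos_mem_outerRegion_component_of_mem_inter hle hpl (hccR R hR) (hout B (.inl hB))
        hv₀ hvR hvS
    · exact outerRegion_anti hSR (hout R (.inr hR) v hvR)
  · exact outerRegion_anti hSB (hout B (.inl hB) v hvB)

end ConnectedIntersection

theorem cplanar_embedding_for_connected_intersection_general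
    {V : Type} (G : SimpleGraph V) (PR PB : Set (Set V))
    (hcc : CConnected G (PB ∪ PR)) :
    (∀ D : Drawing G, D.IsCPlanarFor (PB ∪ PR) →
        D.IsCPlanarFor (connectedIntersectionPartition G PB PR)) ∧
      (IsCPlanar G (PB ∪ PR) →
        IsCPlanar G (connectedIntersectionPartition G PB PR)) := by
  have hccR : CConnected G PR := fun R hR => hcc R (.inr hR)
  refine ⟨fun D hD => hD.connectedIntersectionPartition le_rfl hccR, ?_⟩
  rintro ⟨G', hle, -, D, hD⟩
  refine ⟨G', hle, ?_, D, hD.connectedIntersectionPartition hle hccR⟩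
  rintro _ ⟨B, -, R, -, v₀, hv₀, rfl⟩
  exact (ReachIn.connected_induce hv₀).mono fun _ _ h => hle h

/-- If `(G, PB ∪ PR)` is c-connected, then every planar embedding of `G`
that is c-planar for `PB ∪ PR` is also c-planar for the connected intersection partition
`PI'`; in particular, if `(G, PB ∪ PR)` is c-planar then `(G, PI')` is c-planar. -/
theorem cplanar_embedding_for_connected_intersection
    {V : Type} [Fintype V] (G : SimpleGraph V) (PR PB : Set (Set V))
    (hPR : Setoid.IsPartition PR) (hPB : Setoid.IsPartition PB)
    (hcc : CConnected G (PB ∪ PR)) :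
    (∀ D : Drawing G, D.IsCPlanarFor (PB ∪ PR) →
        D.IsCPlanarFor (connectedIntersectionPartition G PB PR)) ∧
      (IsCPlanar G (PB ∪ PR) →
        IsCPlanar G (connectedIntersectionPartition G PB PR)) :=
  cplanar_embedding_for_connected_intersection_general G PR PB hcc

end ClusteredPlanarity
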